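/- For λ ≠ −1, the map A_{λ,λ+3}(X d/dx)(f) = X⁽³⁾ f' − (λ/2) X⁽⁴⁾ f is a 1-cocycle on vect(1) with values in D_{λ,λ+3} vanishing on sl(2), and it is not the coboundary of any operator of the form f ↦ Σ_{i=0}^{3} a_i f⁽ⁱ⁾ with constant coefficients a_i. -/
import Mathlib

set_option maxRecDepth 8000
set_option maxHeartbeats 2000000

open Polynomial

/-- The action `L^λ_X(f) = X f' + λ X' f` of `X d/dx` on λ-densities. -/
noncomputable def Lact (lam : ℝ) (Xp f : Polynomial ℝ) : Polynomial ℝ :=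
  Xp * derivative f + lam • (derivative Xp * f)

/-- `A_{λ,λ+3}(X d/dx)(f) = X⁽³⁾ f' − (λ/2) X⁽⁴⁾ f`. -/
noncomputable def A3 (lam : ℝ) (Xp f : Polynomial ℝ) : Polynomial ℝ :=
  derivative^[3] Xp * derivative f - (lam / 2) • (derivative^[4] Xp * f)

/-- A constant-coefficient differential operator `f ↦ Σ_{i=0}^{3} a_i f⁽ⁱ⁾`. -/
noncomputable def Bop (a : Fin 4 → ℝ) (f : Polynomial ℝ) : Polynomial ℝ :=
  ∑ i : Fin 4, a i • derivative^[(i : ℕ)] f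

/-- The cocycle identity for `A3`. -/
theorem A3_cocycle' (lam : ℝ) (Xp Yp f : Polynomial ℝ) :
    A3 lam (Xp * derivative Yp - derivative Xp * Yp) f
      = Lact (lam + 3) Xp (A3 lam Yp f) - A3 lam Yp (Lact lam Xp f)
        - (Lact (lam + 3) Yp (A3 lam Xp f) - A3 lam Xp (Lact lam Yp f)) := by
  obtain ⟨u, rfl⟩ : ∃ u : ℝ, lam = 2 * u := ⟨lam / 2, by ring⟩
  have h2 : (2 : ℝ) * u / 2 = u := by ring
  simp only [A3, Lact, h2, Function.iterate_succ, Function.iterate_zero, Function.comp_apply,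
    id_eq, derivative_mul, derivative_sub, derivative_add, derivative_smul,
    smul_eq_C_mul, C_add, C_mul, map_ofNat, derivative_C, derivative_ofNat, zero_mul,
    mul_zero, add_zero, zero_add]
  ring

/-- `A3` vanishes on `sl(2)`. -/
theorem A3_sl2' (lam : ℝ) (Xp : Polynomial ℝ) (h : Xp.degree ≤ 2) (f : Polynomial ℝ) :
    A3 lam Xp f = 0 := by
  have hn : Xp.natDegree ≤ 2 := natDegree_le_iff_degree_le.mpr h
  have h3 : derivative^[3] Xp = 0 := iterate_derivative_eq_zero (by omega)
  have h4 : derivative^[4] Xp = 0 := iterate_derivative_eq_zero (by omega)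
  simp [A3, h3, h4]

/-- `A3` is not a coboundary of a constant-coefficient operator. -/
theorem A3_not_cob' (lam : ℝ) (hlam : lam ≠ -1) (a : Fin 4 → ℝ)
    (ha : ∀ Xp f : Polynomial ℝ,
        A3 lam Xp f = Lact (lam + 3) Xp (Bop a f) - Bop a (Lact lam Xp f)) : False := by
  have h1 := congrArg (eval 0) (ha (X^2) (X^2))
  have h2 := congrArg (eval 0) (ha (X^3) X)
  simp [A3, Lact, Bop, Fin.sum_univ_four, derivative_X_pow, derivative_mul, derivative_smul,
    derivative_natCast, show ((3 : Fin 4) : ℕ) = 3 from rfl, Function.iterate_succ,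
    Function.iterate_zero, Function.comp_apply] at h1 h2
  ring_nf at h1 h2
  have hq : a 3 = 1/2 := by linarith
  rw [hq] at h1
  exact hlam (by linarith)

/-- For `λ ≠ −1`, `A_{λ,λ+3}` is a 1-cocycle with values in `D_{λ,λ+3}`, vanishes
on `sl(2)` (fields `X d/dx` with `deg X ≤ 2`), and is not the coboundary
`X ↦ L^{λ+3}_X∘B − B∘L^λ_X` of any constant-coefficient operator
`B : f ↦ Σ_{i=0}^{3} a_i f⁽ⁱ⁾`. -/
theorem A3_nontrivial_cocycle (lam : ℝ) (hlam : lam ≠ -1) :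
    (∀ Xp Yp f : Polynomial ℝ,
        A3 lam (Xp * derivative Yp - derivative Xp * Yp) f
          = Lact (lam + 3) Xp (A3 lam Yp f) - A3 lam Yp (Lact lam Xp f)
            - (Lact (lam + 3) Yp (A3 lam Xp f) - A3 lam Xp (Lact lam Yp f)))
    ∧ (∀ Xp : Polynomial ℝ, Xp.degree ≤ 2 → ∀ f : Polynomial ℝ, A3 lam Xp f = 0)
    ∧ ¬ ∃ a : Fin 4 → ℝ, ∀ Xp f : Polynomial ℝ,
        A3 lam Xp f = Lact (lam + 3) Xp (Bop a f) - Bop a (Lact lam Xp f) := by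
  refine ⟨A3_cocycle' lam, fun Xp h f => A3_sl2' lam Xp h f, ?_⟩
  rintro ⟨a, ha⟩
  exact A3_not_cob' lam hlam a ha
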